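/- arXiv:2001.03941 — 6 statements merged into one kernel-verified Lean document; each statement's English description precedes it below -/
import Mathlib

section
/- For any integer n ≥ 2, the sum over k from 0 to n of ((-n)_k (n-1)_k) / ((1)_k (1/2)_k) equals (-1)^(n-1)/(2n-1), where (a)_k denotes the Pochhammer symbol (rising factorial). -/
/-!
The sum is the terminating hypergeometric series ₂F₁(-n, n - 1; 1/2; 1), so the Chu–Vandermonde
identity ₂F₁(-n, b; c; 1) = (c - b)ₙ / (c)ₙ evaluates it as (3/2 - n)ₙ / (1/2)ₙ. The reflection
formula (1 - a - n)ₙ = (-1)ⁿ (a)ₙ turns the numerator into (-1)ⁿ⁻¹ (1/2)ₙ₋₁ · 1/2, and the quotient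
collapses to (-1)ⁿ⁻¹ / (2n - 1).
-/

open Finset

/-- The Pochhammer symbol (rising factorial): (a)_0 = 1, (a)_k = a(a+1)⋯(a+k-1). -/
def poch (a : ℚ) : ℕ → ℚ
  | 0 => 1
  | k + 1 => poch a k * (a + k)

theorem poch_succ_right (a : ℚ) (k : ℕ) : poch a (k + 1) = poch a k * (a + k) := rfl

theorem poch_succ_left (a : ℚ) (k : ℕ) : poch a (k + 1) = a * poch (a + 1) k := by
  induction k with
  | zero => simp [poch]
  | succ k ih =>
    rw [poch_succ_right, ih, poch_succ_right]
    push_cast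
    ring

theorem poch_eq_ascPochhammer_eval (a : ℚ) (k : ℕ) : poch a k = (ascPochhammer ℚ k).eval a := by
  induction k with
  | zero => simp [poch]
  | succ k ih => rw [poch_succ_right, ih, ascPochhammer_succ_eval]

theorem poch_pos {a : ℚ} (ha : 0 < a) (k : ℕ) : 0 < poch a k := by
  rw [poch_eq_ascPochhammer_eval]
  exact ascPochhammer_pos k a ha

theorem poch_one (k : ℕ) : poch 1 k = k.factorial := by
  rw [poch_eq_ascPochhammer_eval, ascPochhammer_eval_one]

theorem poch_neg_natCast_div_poch_one (n k : ℕ) :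
    poch (-n) k / poch 1 k = (-1) ^ k * n.choose k := by
  rw [poch_eq_ascPochhammer_eval, ascPochhammer_eval_neg_eq_descPochhammer,
    descPochhammer_eval_eq_descFactorial, Nat.descFactorial_eq_factorial_mul_choose, poch_one]
  have : (k.factorial : ℚ) ≠ 0 := by positivity
  push_cast
  field_simp

theorem poch_one_sub_sub_natCast (a : ℚ) (n : ℕ) : poch (1 - a - n) n = (-1) ^ n * poch a n := by
  induction n with
  | zero => simp [poch]
  | succ n ih =>
    rw [poch_succ_left, show 1 - a - (n + 1 : ℕ) + 1 = 1 - a - n by push_cast; ring, ih,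
      poch_succ_right]
    push_cast
    ring

theorem sum_choose_mul_poch_div_poch (n : ℕ) (b c : ℚ) (hc : poch c n ≠ 0) :
    ∑ k ∈ range (n + 1), (n.choose k : ℚ) * ((-1) ^ k * poch b k / poch c k)
      = poch (c - b) n / poch c n := by
  induction n generalizing b c with
  | zero => simp [poch]
  | succ n ih =>
    have hc_left : c * poch (c + 1) n ≠ 0 := by rwa [← poch_succ_left]
    have hc_right : poch c n * (c + n) ≠ 0 := by rwa [← poch_succ_right]
    have hc0 : c ≠ 0 := left_ne_zero_of_mul hc_left
    have hc1 : poch (c + 1) n ≠ 0 := right_ne_zero_of_mul hc_left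
    have hcn : poch c n ≠ 0 := left_ne_zero_of_mul hc_right
    have hcn' : c + n ≠ 0 := right_ne_zero_of_mul hc_right
    -- Pascal's rule splits the sum into the one for (n, b, c) and -(b/c) times the one for
    -- (n, b + 1, c + 1).
    have shift : ∀ i, (-1) ^ (i + 1) * poch b (i + 1) / poch c (i + 1)
        = -(b / c) * ((-1) ^ i * poch (b + 1) i / poch (c + 1) i) := fun i => by
      rw [poch_succ_left, poch_succ_left]
      field_simp
      ring
    rw [sum_choose_succ_mul (fun i _ => (-1) ^ i * poch b i / poch c i) n]
    simp only [shift, mul_left_comm _ (-(b / c)), ← mul_sum]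
    rw [ih b c hcn, ih (b + 1) (c + 1) hc1, poch_succ_right (c - b), poch_succ_right c]
    have hc1_eq : poch (c + 1) n = poch c n * (c + n) / c := by
      rw [eq_div_iff hc0, ← poch_succ_right, poch_succ_left, mul_comm]
    rw [hc1_eq, show c + 1 - (b + 1) = c - b by ring]
    field_simp
    ring

theorem chu_vandermonde (n : ℕ) (b c : ℚ) (hc : poch c n ≠ 0) :
    ∑ k ∈ range (n + 1), poch (-n) k * poch b k / (poch 1 k * poch c k)
      = poch (c - b) n / poch c n := by
  rw [← sum_choose_mul_poch_div_poch n b c hc]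
  refine sum_congr rfl fun k _ => ?_
  rw [mul_div_mul_comm, poch_neg_natCast_div_poch_one]
  ring

theorem poch_half_sub_natCast_div_poch_half (m : ℕ) :
    poch (1 / 2 - m) (m + 1) / poch (1 / 2) (m + 1) = (-1) ^ m / (2 * m + 1) := by
  have hm : (2 * m + 1 : ℚ) ≠ 0 := by positivity
  have hpm : poch (1 / 2) m ≠ 0 := (poch_pos one_half_pos m).ne'
  rw [poch_succ_right, poch_succ_right, show (1 / 2 : ℚ) - m = 1 - 1 / 2 - m by ring,
    poch_one_sub_sub_natCast, show (1 : ℚ) - 1 / 2 - m + m = 1 / 2 by ring]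
  field_simp
  ring

theorem stmt0 (n : ℕ) (hn : 2 ≤ n) :
    ∑ k ∈ Finset.range (n + 1),
      poch (-(n : ℚ)) k * poch ((n : ℚ) - 1) k / (poch 1 k * poch (1/2) k)
    = (-1) ^ (n - 1) / (2 * (n : ℚ) - 1) := by
  rw [chu_vandermonde n _ _ (poch_pos one_half_pos n).ne']
  obtain ⟨m, rfl⟩ : ∃ m, n = m + 1 := ⟨n - 1, by omega⟩
  rw [Nat.add_sub_cancel, Nat.cast_succ, add_sub_cancel_right,
    poch_half_sub_natCast_div_poch_half, show 2 * ((m : ℚ) + 1) - 1 = 2 * m + 1 by ring]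
end

section
/- For any non-negative integer n, the sum over k from 0 to n of ((-n)_k (n+1)_k (1/4)_k (3/4)_k) / ((1)_k^2 (1/2)_k (3/2)_k) equals binomial(2n, n)/4^n. -/
/-!
Creative telescoping. Zeilberger's algorithm gives, for the summand `F n k`, a certificate
`G n k` with
`(2n+5)(n+2) F(n+2,k) - (8n²+24n+19)/2 F(n+1,k) + (2n+1)(n+1) F(n,k) = G(n,k+1) - G(n,k)`,
an identity of rational functions once `F(n,k)`, `F(n+1,k)` and `F(n+2,k+1)` are written as
rational multiples of `F(n+2,k)`. Since `G(n,0) = 0` and `F(n,k) = 0` for `k > n`, summing over `k` shows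
that the sums satisfy this second-order recurrence. So does `C(2n,n)/4ⁿ`, whose consecutive
ratio is `(2n+1)/(2n+2)`, and the two sequences agree at `n = 0, 1`.
-/

open Finset

theorem eq_of_recurrence_two {R : Type*} [Ring R] [NoZeroDivisors R] {a b c f g : ℕ → R}
    (ha : ∀ n, a n ≠ 0) (hf : ∀ n, a n * f (n + 2) + b n * f (n + 1) + c n * f n = 0)
    (hg : ∀ n, a n * g (n + 2) + b n * g (n + 1) + c n * g n = 0) (h0 : f 0 = g 0)
    (h1 : f 1 = g 1) : f = g := by
  funext n
  induction n using Nat.twoStepInduction with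
  | zero => exact h0
  | one => exact h1
  | more n ihn ihn1 =>
    have h := (hf n).trans (hg n).symm
    rw [ihn, ihn1] at h
    exact mul_left_cancel₀ (ha n) (add_right_cancel (add_right_cancel h))

theorem poch_neg_natCast_of_lt {n k : ℕ} (h : n < k) : poch (-(n : ℚ)) k = 0 := by
  rw [poch_eq_ascPochhammer_eval]
  exact ascPochhammer_eval_neg_coe_nat_of_lt h

theorem poch_neg_mul_poch_add_one (x : ℚ) (k : ℕ) :
    poch (-x) k * poch (x + 1) k * (x + 1 + k) =
      poch (-(x + 1)) k * poch (x + 2) k * (x + 1 - k) := by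
  have hneg : poch (-(x + 1)) k * (-(x + 1) + k) = -(x + 1) * poch (-x) k := by
    rw [← poch_succ_right, poch_succ_left]; ring_nf
  have hpos : poch (x + 1) k * (x + 1 + k) = (x + 1) * poch (x + 2) k := by
    rw [← poch_succ_right, poch_succ_left]; ring_nf
  linear_combination poch (-x) k * hpos + poch (x + 2) k * hneg

def summand (n k : ℕ) : ℚ :=
  poch (-(n : ℚ)) k * poch ((n : ℚ) + 1) k * poch (1/4) k * poch (3/4) k /
    (poch 1 k ^ 2 * poch (1/2) k * poch (3/2) k)

def hypersum (n : ℕ) : ℚ := ∑ k ∈ Finset.range (n + 1), summand n k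

theorem summand_eq_zero_of_lt {n k : ℕ} (h : n < k) : summand n k = 0 := by
  simp [summand, poch_neg_natCast_of_lt h]

theorem summand_eq_summand_succ_mul_div (n k : ℕ) :
    summand n k = summand (n + 1) k * (n + 1 - k) / (n + 1 + k) := by
  rw [eq_div_iff (by positivity)]
  simp only [summand, div_mul_eq_mul_div]
  push_cast
  rw [show (n : ℚ) + 1 + 1 = n + 2 by ring]
  congr 1
  linear_combination poch (1/4) k * poch (3/4) k * poch_neg_mul_poch_add_one n k

theorem summand_succ_eq_summand_mul_div (n k : ℕ) :
    summand n (k + 1) = summand n k * ((k - n) * (k + n + 1) * (k + 1/4) * (k + 3/4)) /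
      ((k + 1) ^ 2 * (k + 1/2) * (k + 3/2)) := by
  have h1 := poch_pos (a := 1) one_pos k
  have h2 := poch_pos (a := 1/2) (by norm_num) k
  have h3 := poch_pos (a := 3/2) (by norm_num) k
  simp only [summand, poch_succ_right]
  field_simp
  ring

def certificate (n k : ℕ) : ℚ :=
  -2 * k ^ 2 * (2 * k - 1) * (2 * k + 1) * summand (n + 2) k / ((n + k + 1) * (n + k + 2))

theorem summand_recurrence (n k : ℕ) :
    (2 * n + 5) * (n + 2) * summand (n + 2) k - (8 * n ^ 2 + 24 * n + 19) / 2 * summand (n + 1) k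
      + (2 * n + 1) * (n + 1) * summand n k = certificate n (k + 1) - certificate n k := by
  rw [summand_eq_summand_succ_mul_div n, summand_eq_summand_succ_mul_div (n + 1), certificate,
    certificate, summand_succ_eq_summand_mul_div]
  push_cast
  field_simp
  ring

theorem sum_range_summand_of_lt {n N : ℕ} (h : n < N) :
    ∑ k ∈ range N, summand n k = hypersum n :=
  (sum_subset (range_subset_range.2 h) fun _ _ hk ↦
    summand_eq_zero_of_lt (by simpa using hk)).symm

theorem hypersum_recurrence (n : ℕ) :
    (2 * n + 5) * (n + 2) * hypersum (n + 2) - (8 * n ^ 2 + 24 * n + 19) / 2 * hypersum (n + 1)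
      + (2 * n + 1) * (n + 1) * hypersum n = 0 := by
  simp only [← sum_range_summand_of_lt (N := n + 3) (by omega : n + 2 < n + 3),
    ← sum_range_summand_of_lt (N := n + 3) (by omega : n + 1 < n + 3),
    ← sum_range_summand_of_lt (N := n + 3) (by omega : n < n + 3), mul_sum, ← sum_sub_distrib,
    ← sum_add_distrib, summand_recurrence, sum_range_sub]
  simp [certificate, summand_eq_zero_of_lt (show n + 2 < n + 3 by omega)]

theorem centralBinom_div_four_pow_succ (n : ℕ) :
    (Nat.centralBinom (n + 1) : ℚ) / 4 ^ (n + 1) =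
      Nat.centralBinom n / 4 ^ n * (2 * n + 1) / (2 * n + 2) := by
  have h : ((n + 1 : ℕ) : ℚ) * Nat.centralBinom (n + 1) =
      2 * (2 * n + 1) * Nat.centralBinom n := by
    exact_mod_cast Nat.succ_mul_centralBinom_succ n
  push_cast at h
  rw [pow_succ]
  field_simp
  linear_combination 2 * h

theorem centralBinom_div_four_pow_recurrence (n : ℕ) :
    (2 * n + 5) * (n + 2) * (Nat.centralBinom (n + 2) / 4 ^ (n + 2) : ℚ)
      - (8 * n ^ 2 + 24 * n + 19) / 2 * (Nat.centralBinom (n + 1) / 4 ^ (n + 1) : ℚ)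
      + (2 * n + 1) * (n + 1) * (Nat.centralBinom n / 4 ^ n : ℚ) = 0 := by
  rw [centralBinom_div_four_pow_succ (n + 1), centralBinom_div_four_pow_succ n]
  push_cast
  field_simp
  ring

theorem hypersum_eq_centralBinom_div_four_pow :
    hypersum = fun n ↦ (Nat.centralBinom n : ℚ) / 4 ^ n :=
  eq_of_recurrence_two (a := fun n : ℕ ↦ ((2 * n + 5) * (n + 2) : ℚ))
    (b := fun n ↦ -((8 * n ^ 2 + 24 * n + 19) / 2)) (c := fun n ↦ (2 * n + 1) * (n + 1))
    (fun n ↦ by positivity) (fun n ↦ by linear_combination hypersum_recurrence n)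
    (fun n ↦ by linear_combination centralBinom_div_four_pow_recurrence n)
    (by norm_num [hypersum, summand, poch])
    (by norm_num [hypersum, summand, poch, sum_range_succ, Nat.centralBinom])

theorem stmt4 (n : ℕ) :
    ∑ k ∈ Finset.range (n + 1),
      poch (-(n : ℚ)) k * poch ((n : ℚ) + 1) k * poch (1/4) k * poch (3/4) k /
        (poch 1 k ^ 2 * poch (1/2) k * poch (3/2) k)
    = (Nat.choose (2 * n) n : ℚ) / 4 ^ n :=
  congrFun hypersum_eq_centralBinom_div_four_pow n
end

section
/- For any odd prime p and any integer k with 0 ≤ k ≤ (p-1)/2, the product ((1+p)/2)_k · ((1-p)/2)_k is congruent to ((1/2)_k)^2 · (1 - p^2 · sum over j from 1 to k of 1/(2j-1)^2) modulo p^4. -/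
open Finset

/-!
Pairing the factors of the two Pochhammer symbols gives
`((1+p)/2 + j)((1-p)/2 + j) = (j + 1/2)² (1 - p² / (2j+1)²)`, so the left-hand side is
`((1/2)_k)² ∏_{j<k} (1 - p² yⱼ)` with `yⱼ = (2j+1)⁻²`. Since `2k < p`, every `yⱼ` and
`(1/2)_k` is `p`-integral, and expanding the product modulo `p⁴` leaves `1 - p² ∑ yⱼ`.
-/

theorem poch_eq_prod_range (a : ℚ) (k : ℕ) : poch a k = ∏ j ∈ range k, (a + j) := by
  induction k with
  | zero => rfl
  | succ k ih => rw [prod_range_succ, ← ih]; rfl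

theorem exists_prod_one_sub_mul_eq {R ι : Type*} [CommRing R] (S : Subring R) {ε : R}
    (hε : ε ∈ S) (s : Finset ι) (y : ι → R) (hy : ∀ j ∈ s, y j ∈ S) :
    ∃ E ∈ S, ∏ j ∈ s, (1 - ε * y j) = 1 - ε * ∑ j ∈ s, y j + ε ^ 2 * E := by
  classical
  induction s using Finset.induction_on with
  | empty => exact ⟨0, S.zero_mem, by simp⟩
  | insert i s hi ih =>
    obtain ⟨E, hES, hE⟩ := ih fun j hj => hy j (mem_insert_of_mem hj)
    have hyi := hy i (mem_insert_self i s)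
    refine ⟨y i * ∑ j ∈ s, y j + E - ε * y i * E, ?_, ?_⟩
    · have hsum : ∑ j ∈ s, y j ∈ S := S.sum_mem fun j hj => hy j (mem_insert_of_mem hj)
      exact S.sub_mem (S.add_mem (S.mul_mem hyi hsum) hES)
        (S.mul_mem (S.mul_mem hε hyi) hES)
    · rw [prod_insert hi, sum_insert hi, hE]
      ring

section IntegralSubring

variable (p : ℕ) [Fact p.Prime]

def padicIntegralSubring : Subring ℚ where
  carrier := {x | padicNorm p x ≤ 1}
  mul_mem' {x y} hx hy := by
    simp only [Set.mem_ofPred_eq, padicNorm.mul] at *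
    exact mul_le_one₀ hx (padicNorm.nonneg y) hy
  one_mem' := (padicNorm.one (p := p)).le
  add_mem' hx hy := padicNorm.nonarchimedean.trans (max_le hx hy)
  zero_mem' := by simp
  neg_mem' {x} hx := by simpa only [Set.mem_ofPred_eq, padicNorm.neg] using hx

variable {p}

theorem mem_padicIntegralSubring {x : ℚ} : x ∈ padicIntegralSubring p ↔ padicNorm p x ≤ 1 :=
  Iff.rfl

theorem natCast_inv_mem_padicIntegralSubring {n : ℕ} (hn₀ : 0 < n) (hn : n < p) :
    (n : ℚ)⁻¹ ∈ padicIntegralSubring p := by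
  have hunit : padicNorm p n = 1 :=
    (padicNorm.nat_eq_one_iff n).mpr (Nat.not_dvd_of_pos_of_lt hn₀ hn)
  rw [mem_padicIntegralSubring, IsAbsoluteValue.abv_inv (padicNorm p), hunit, inv_one]

theorem poch_half_mem_padicIntegralSubring {k : ℕ} (hk : 2 * k < p) :
    poch (1 / 2) k ∈ padicIntegralSubring p := by
  rw [poch_eq_prod_range]
  refine Subring.prod_mem _ fun j hj => ?_
  have hj : j < k := mem_range.mp hj
  have hfactor : (1 / 2 + j : ℚ) = ((2 * j + 1 : ℕ) : ℚ) * ((2 : ℕ) : ℚ)⁻¹ := by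
    push_cast; ring
  rw [hfactor]
  exact Subring.mul_mem _ (natCast_mem _ _)
    (natCast_inv_mem_padicIntegralSubring two_pos (by omega))

end IntegralSubring

theorem sum_Icc_one_div_two_mul_sub_one_sq (k : ℕ) :
    ∑ j ∈ Icc 1 k, (1 : ℚ) / (2 * (j : ℚ) - 1) ^ 2 =
      ∑ j ∈ range k, (((2 * j + 1 : ℕ) : ℚ)⁻¹) ^ 2 := by
  rw [← Ico_add_one_right_eq_Icc, sum_Ico_eq_sum_range, Nat.add_sub_cancel]
  refine sum_congr rfl fun j _ => ?_
  rw [one_div, inv_pow]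
  push_cast
  ring

theorem poch_mul_poch_eq_prod (p : ℚ) (k : ℕ) :
    poch ((1 + p) / 2) k * poch ((1 - p) / 2) k =
      poch (1 / 2) k ^ 2 *
        ∏ j ∈ range k, (1 - p ^ 2 * (((2 * j + 1 : ℕ) : ℚ)⁻¹) ^ 2) := by
  simp only [poch_eq_prod_range, ← prod_pow, ← prod_mul_distrib]
  refine prod_congr rfl fun j _ => ?_
  have h : ((2 * j + 1 : ℕ) : ℚ) ≠ 0 := by positivity
  field_simp
  push_cast
  ring

theorem stmt10_general (p : ℕ) (hp : p.Prime) (k : ℕ) (hk : k ≤ (p - 1) / 2) :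
    padicNorm p
      (poch ((1 + (p : ℚ)) / 2) k * poch ((1 - (p : ℚ)) / 2) k
        - poch (1/2) k ^ 2 *
            (1 - (p : ℚ) ^ 2 * ∑ j ∈ Finset.Icc 1 k, (1 : ℚ) / (2 * (j : ℚ) - 1) ^ 2))
      ≤ (p : ℚ) ^ (-4 : ℤ) := by
  have : Fact p.Prime := ⟨hp⟩
  have h2k : 2 * k < p := by have := hp.two_le; omega
  set S := padicIntegralSubring p
  have hy : ∀ j ∈ range k, (((2 * j + 1 : ℕ) : ℚ)⁻¹) ^ 2 ∈ S := fun j hj =>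
    have hj : j < k := mem_range.mp hj
    S.pow_mem (natCast_inv_mem_padicIntegralSubring (by omega) (by omega)) 2
  obtain ⟨E, hES, hE⟩ :=
    exists_prod_one_sub_mul_eq S (S.pow_mem (natCast_mem S p) 2) (range k) _ hy
  have hdiff : poch ((1 + (p : ℚ)) / 2) k * poch ((1 - (p : ℚ)) / 2) k
        - poch (1/2) k ^ 2 *
            (1 - (p : ℚ) ^ 2 * ∑ j ∈ Icc 1 k, (1 : ℚ) / (2 * (j : ℚ) - 1) ^ 2)
      = (p : ℚ) ^ 4 * (poch (1 / 2) k ^ 2 * E) := by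
    rw [poch_mul_poch_eq_prod, hE, sum_Icc_one_div_two_mul_sub_one_sq]
    ring
  have hintegral : padicNorm p (poch (1 / 2) k ^ 2 * E) ≤ 1 := mem_padicIntegralSubring.mp <|
    S.mul_mem (S.pow_mem (poch_half_mem_padicIntegralSubring h2k) 2) hES
  rw [hdiff, padicNorm.mul, IsAbsoluteValue.abv_pow (padicNorm p),
    padicNorm.padicNorm_p_of_prime, inv_pow, ← zpow_natCast, ← zpow_neg]
  exact mul_le_of_le_one_right (by positivity) hintegral

theorem stmt10 (p : ℕ) (hp : p.Prime) (hodd : Odd p) (k : ℕ) (hk : k ≤ (p - 1) / 2) :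
    padicNorm p
      (poch ((1 + (p : ℚ)) / 2) k * poch ((1 - (p : ℚ)) / 2) k
        - poch (1/2) k ^ 2 *
            (1 - (p : ℚ) ^ 2 * ∑ j ∈ Finset.Icc 1 k, (1 : ℚ) / (2 * (j : ℚ) - 1) ^ 2))
      ≤ (p : ℚ) ^ (-4 : ℤ) :=
  stmt10_general p hp k hk
end

section
/- For any prime p and any integer k with 0 ≤ k ≤ p-1, the binomial coefficient binomial(p-1, k) is congruent to (-1)^k (1 - p H_k + (p^2/2)(H_k^2 - H_k^(2))) modulo p^3, where H_k = sum over j from 1 to k of 1/j and H_k^(2) = sum over j from 1 to k of 1/j^2. -/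
/-!
Write `(-1)^k * C(p-1, k) = ∏_{j ≤ k} (1 - p/j)` and expand the product in powers of `t = -p`:
its truncation after the quadratic term is `1 + t e₁ + t² e₂`, with `e₁ = H_k` and
`e₂ = (H_k² - H_k^(2)) / 2` the first two elementary symmetric functions of the `1/j`.
Adjoining one factor `1 + t x` multiplies the error by `1 + t x` and adds `t³ x e₂`,
so the error stays of size `|t|³` as long as all `1/j` (and hence `e₂`) are `p`-integral.
-/

open Finset

theorem neg_one_pow_mul_choose_eq_prod (n k : ℕ) :
    (-1) ^ k * (n.choose k : ℚ) = ∏ j ∈ Icc 1 k, (1 - (n + 1 : ℚ) / j) := by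
  induction k with
  | zero => simp
  | succ k ih =>
    rw [prod_Icc_succ_top (by omega), ← ih]
    have hchoose : (n.choose (k + 1) : ℚ) * (k + 1) = n.choose k * (n - k) := by
      rcases le_or_gt k n with hkn | hnk
      · have h := congrArg (Nat.cast : ℕ → ℚ) (Nat.choose_succ_right_eq n k)
        push_cast [Nat.cast_sub hkn] at h
        exact h
      · simp [Nat.choose_eq_zero_of_lt hnk, Nat.choose_eq_zero_of_lt (hnk.trans k.lt_succ_self)]
    have hk : (k + 1 : ℚ) ≠ 0 := by positivity
    push_cast
    field_simp
    linear_combination -(-1) ^ k * hchoose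

theorem padicNorm_one_div_natCast_eq_one {p : ℕ} [Fact p.Prime] {j : ℕ} (hj : ¬p ∣ j) :
    padicNorm p (1 / (j : ℚ)) = 1 := by
  rw [padicNorm.div, padicNorm.one, (padicNorm.nat_eq_one_iff j).2 hj, div_one]

section SecondOrderExpansion

variable {p : ℕ} [Fact p.Prime] {ι : Type*} [DecidableEq ι] (x : ι → ℚ)

theorem padicNorm_sq_sum_sub_sum_sq_div_two_le_one {s : Finset ι}
    (hx : ∀ i ∈ s, padicNorm p (x i) ≤ 1) :
    padicNorm p (((∑ i ∈ s, x i) ^ 2 - ∑ i ∈ s, x i ^ 2) / 2) ≤ 1 := by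
  induction s using Finset.induction_on with
  | empty => simp
  | insert a s ha ih =>
    rw [forall_mem_insert] at hx
    rw [sum_insert ha, sum_insert ha,
      show ∀ S Q : ℚ, ((x a + S) ^ 2 - (x a ^ 2 + Q)) / 2 = (S ^ 2 - Q) / 2 + x a * S by
        intros; ring]
    refine padicNorm.nonarchimedean.trans (max_le (ih hx.2) ?_)
    rw [padicNorm.mul]
    exact mul_le_one₀ hx.1 (padicNorm.nonneg _) (padicNorm.sum_le' hx.2 zero_le_one)

theorem padicNorm_prod_one_add_mul_sub_le {s : Finset ι} {t : ℚ} (ht : padicNorm p t ≤ 1)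
    (hx : ∀ i ∈ s, padicNorm p (x i) ≤ 1) :
    padicNorm p (∏ i ∈ s, (1 + t * x i)
        - (1 + t * ∑ i ∈ s, x i
          + t ^ 2 * (((∑ i ∈ s, x i) ^ 2 - ∑ i ∈ s, x i ^ 2) / 2)))
      ≤ padicNorm p t ^ 3 := by
  induction s using Finset.induction_on with
  | empty => simpa using pow_nonneg (padicNorm.nonneg t) 3
  | insert a s ha ih =>
    have he₂ :=
      padicNorm_sq_sum_sub_sum_sq_div_two_le_one x fun i hi => hx i (mem_insert_of_mem hi)
    rw [forall_mem_insert] at hx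
    set e₂ := ((∑ i ∈ s, x i) ^ 2 - ∑ i ∈ s, x i ^ 2) / 2
    have hstep : ∏ i ∈ insert a s, (1 + t * x i)
        - (1 + t * ∑ i ∈ insert a s, x i
          + t ^ 2 * (((∑ i ∈ insert a s, x i) ^ 2 - ∑ i ∈ insert a s, x i ^ 2) / 2))
        = (1 + t * x a) * (∏ i ∈ s, (1 + t * x i) - (1 + t * ∑ i ∈ s, x i + t ^ 2 * e₂))
          + t ^ 3 * (x a * e₂) := by
      simp only [prod_insert ha, sum_insert ha, e₂]
      ring
    have hfactor : padicNorm p (1 + t * x a) ≤ 1 := by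
      refine padicNorm.nonarchimedean.trans (max_le padicNorm.one.le ?_)
      rw [padicNorm.mul]
      exact mul_le_one₀ ht (padicNorm.nonneg _) hx.1
    rw [hstep]
    refine padicNorm.nonarchimedean.trans (max_le ?_ ?_)
    · rw [padicNorm.mul]
      exact (mul_le_mul hfactor (ih hx.2) (padicNorm.nonneg _) zero_le_one).trans_eq
        (one_mul _)
    · rw [padicNorm.mul, padicNorm.mul, IsAbsoluteValue.abv_pow (padicNorm p)]
      exact mul_le_of_le_one_right (pow_nonneg (padicNorm.nonneg t) 3)
        (mul_le_one₀ hx.1 (padicNorm.nonneg _) he₂)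

end SecondOrderExpansion

theorem stmt11 (p : ℕ) (hp : p.Prime) (k : ℕ) (hk : k ≤ p - 1) :
    padicNorm p
      ((Nat.choose (p - 1) k : ℚ)
        - (-1) ^ k *
            (1 - (p : ℚ) * (∑ j ∈ Finset.Icc 1 k, (1 : ℚ) / j)
              + (p : ℚ) ^ 2 / 2 *
                  ((∑ j ∈ Finset.Icc 1 k, (1 : ℚ) / j) ^ 2
                    - ∑ j ∈ Finset.Icc 1 k, (1 : ℚ) / (j : ℚ) ^ 2)))
      ≤ (p : ℚ) ^ (-3 : ℤ) := by
  have : Fact p.Prime := ⟨hp⟩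
  have hprod : (-1) ^ k * (Nat.choose (p - 1) k : ℚ)
      = ∏ j ∈ Icc 1 k, (1 + (-p : ℚ) * (1 / j)) := by
    rw [neg_one_pow_mul_choose_eq_prod]
    refine prod_congr rfl fun j _ => ?_
    rw [Nat.cast_sub hp.one_le]
    ring
  have hinv : ∀ j ∈ Icc 1 k, padicNorm p (1 / (j : ℚ)) ≤ 1 := fun j hj =>
    (padicNorm_one_div_natCast_eq_one fun hdvd =>
      absurd (Nat.le_of_dvd (mem_Icc.1 hj).1 hdvd) (by grind)).le
  have hnorm_p : padicNorm p (-p : ℚ) = (p : ℚ)⁻¹ := by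
    rw [padicNorm.neg, padicNorm.padicNorm_p_of_prime]
  have hexpand := padicNorm_prod_one_add_mul_sub_le (fun j : ℕ => 1 / (j : ℚ))
    (hnorm_p.trans_le (inv_le_one_of_one_le₀ (by exact_mod_cast hp.one_le))) hinv
  rw [hnorm_p, ← hprod] at hexpand
  have hsign : ((-1 : ℚ) ^ k) ^ 2 = 1 := by
    rw [← pow_mul, mul_comm, pow_mul, neg_one_sq, one_pow]
  calc _ = padicNorm p ((-1) ^ k * ((-1) ^ k * (Nat.choose (p - 1) k : ℚ)
        - (1 + (-p : ℚ) * ∑ j ∈ Icc 1 k, 1 / (j : ℚ)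
          + (-p : ℚ) ^ 2 * (((∑ j ∈ Icc 1 k, 1 / (j : ℚ)) ^ 2
            - ∑ j ∈ Icc 1 k, (1 / (j : ℚ)) ^ 2) / 2)))) := by
        simp only [div_pow, one_pow]
        congr 1
        linear_combination -(Nat.choose (p - 1) k : ℚ) * hsign
    _ ≤ (p : ℚ)⁻¹ ^ 3 := by
        rwa [padicNorm.mul, IsAbsoluteValue.abv_pow (padicNorm p), padicNorm.neg, padicNorm.one,
          one_pow, one_mul]
    _ = (p : ℚ) ^ (-3 : ℤ) := by rw [zpow_neg, inv_pow]; norm_cast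
end

section
/- For any prime p ≥ 5, the harmonic number H_((p-1)/2) = sum over j from 1 to (p-1)/2 of 1/j is congruent to -2 q_p(2) + p q_p(2)^2 modulo p^2, where q_p(2) = (2^(p-1)-1)/p. -/
/-!
Write `p = 2m + 1`. The identity `2 ^ (p - 1) = ∏_{i<m} (1 + p/(2i+1))` is expanded to second
order `p`-adically: with `O = Σ 1/(2i+1)` and `T` the sum of the pairwise products of the
`1/(2i+1)`, it gives `q_p(2) ≡ O + pT (mod p²)`. The inverse squares of the odd residues sum to
`0 (mod p)`, so `2T = O² - Σ 1/(2i+1)² ≡ q_p(2)² (mod p)`. Finally `H_{2m} = O + H_m / 2`, and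
Wolstenholme's `H_{p-1} ≡ 0 (mod p²)`, obtained by pairing `1/j` with `1/(p-j)`, turns this into
`H_m ≡ -2O ≡ -2 q_p(2) + p q_p(2)² (mod p²)`.
-/

open Finset IsUltrametricDist

namespace Finset

@[to_additive sum_range_two_mul]
theorem prod_range_two_mul {M : Type*} [CommMonoid M] (f : ℕ → M) (m : ℕ) :
    ∏ j ∈ range (2 * m), f j = (∏ i ∈ range m, f (2 * i)) * ∏ i ∈ range m, f (2 * i + 1) := by
  induction m with
  | zero => simp
  | succ m ih =>
    rw [show 2 * (m + 1) = 2 * m + 1 + 1 by ring, prod_range_succ, prod_range_succ, ih,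
      prod_range_succ, prod_range_succ, mul_mul_mul_comm, mul_assoc]

theorem sum_range_two_mul_eq_sum_add_reflect {M : Type*} [AddCommMonoid M] (f : ℕ → M) (m : ℕ) :
    ∑ j ∈ range (2 * m), f j = ∑ i ∈ range m, (f i + f (2 * m - 1 - i)) := by
  rw [two_mul, sum_range_add, ← sum_range_reflect (fun j ↦ f (m + j)) m, ← sum_add_distrib]
  refine sum_congr rfl fun i hi ↦ ?_
  have := mem_range.mp hi
  congr 2
  omega

theorem two_mul_sum_mul_sum_range {R : Type*} [CommRing R] (z : ℕ → R) (m : ℕ) :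
    2 * ∑ i ∈ range m, z i * ∑ j ∈ range i, z j
      = (∑ i ∈ range m, z i) ^ 2 - ∑ i ∈ range m, z i ^ 2 := by
  induction m with
  | zero => simp
  | succ m ih =>
    simp only [sum_range_succ]
    linear_combination ih

end Finset

theorem Nat.prod_range_add_eq_two_pow_mul_prod_odd (m : ℕ) :
    ∏ i ∈ range m, (m + 1 + i) = 2 ^ m * ∏ i ∈ range m, (2 * i + 1) := by
  have hodd : (2 * m).factorial = (∏ i ∈ range m, (2 * i + 1)) * (2 ^ m * m.factorial) := by
    have heven : ∏ i ∈ range m, (2 * i + 1 + 1) = 2 ^ m * m.factorial := by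
      rw [← prod_range_add_one_eq_factorial, ← card_range m, ← prod_const, card_range,
        ← prod_mul_distrib]
      exact prod_congr rfl fun i _ ↦ by ring
    rw [← prod_range_add_one_eq_factorial, prod_range_two_mul, heven]
  refine Nat.eq_of_mul_eq_mul_left m.factorial_pos ?_
  rw [← ascFactorial_eq_prod_range, factorial_mul_ascFactorial, ← two_mul, hodd]
  ring

theorem prod_range_one_add_div_odd {K : Type*} [Field K] [CharZero K] (m : ℕ) :
    ∏ i ∈ range m, (1 + (2 * m + 1 : K) / (2 * i + 1)) = 2 ^ (2 * m) := by
  have hodd : ∀ i : ℕ, (2 * i + 1 : K) ≠ 0 := fun i ↦ by exact_mod_cast (2 * i).succ_ne_zero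
  have hnat := congrArg (fun n : ℕ ↦ (n : K)) (Nat.prod_range_add_eq_two_pow_mul_prod_odd m)
  push_cast at hnat
  calc ∏ i ∈ range m, (1 + (2 * m + 1 : K) / (2 * i + 1))
      = (∏ i ∈ range m, (2 * (m + 1 + i) : K)) / ∏ i ∈ range m, (2 * i + 1 : K) := by
        rw [← prod_div_distrib]
        exact prod_congr rfl fun i _ ↦ by field_simp [hodd i]; ring
    _ = 2 ^ (2 * m) := by
        rw [prod_mul_distrib, prod_const, card_range, hnat,
          mul_div_assoc, mul_div_cancel_right₀ _ (prod_ne_zero_iff.mpr fun i _ ↦ hodd i)]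
        ring

theorem harmonic_two_mul (m : ℕ) :
    harmonic (2 * m) = ∑ i ∈ range m, (2 * (i : ℚ) + 1)⁻¹ + harmonic m / 2 := by
  simp only [harmonic, sum_range_two_mul, sum_div]
  congr 1 <;> refine sum_congr rfl fun i _ ↦ ?_
  · push_cast; ring
  · push_cast; field_simp; ring

theorem norm_prod_range_one_add_sub_le {R : Type*} [NormedCommRing R] [IsUltrametricDist R]
    (z : ℕ → R) (m : ℕ) {ε : ℝ} (hε0 : 0 ≤ ε) (hε1 : ε ≤ 1) (hz : ∀ i < m, ‖z i‖ ≤ ε) :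
    ‖∏ i ∈ range m, (1 + z i)
      - (1 + ∑ i ∈ range m, z i + ∑ i ∈ range m, z i * ∑ j ∈ range i, z j)‖ ≤ ε ^ 3 := by
  induction m with
  | zero => simpa using by positivity
  | succ m ih =>
    have hz' : ∀ i < m, ‖z i‖ ≤ ε := fun i hi ↦ hz i (by omega)
    have hsum : ∀ i ≤ m, ‖∑ j ∈ range i, z j‖ ≤ ε := fun i hi ↦
      norm_sum_le_of_forall_le_of_nonneg hε0 fun j hj ↦
        hz' j (by rw [mem_range] at hj; omega)
    have hpairs : ‖∑ i ∈ range m, z i * ∑ j ∈ range i, z j‖ ≤ ε ^ 2 :=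
      norm_sum_le_of_forall_le_of_nonneg (by positivity) fun i hi ↦ by
        rw [mem_range] at hi
        exact (norm_mul_le _ _).trans
          (by rw [sq]; exact mul_le_mul (hz' i hi) (hsum i hi.le) (norm_nonneg _) hε0)
    set c := ∏ i ∈ range m, (1 + z i)
      - (1 + ∑ i ∈ range m, z i + ∑ i ∈ range m, z i * ∑ j ∈ range i, z j)
    have hc : ‖c + ∑ i ∈ range m, z i * ∑ j ∈ range i, z j‖ ≤ ε ^ 2 :=
      (norm_add_le_max _ _).trans
        (max_le ((ih hz').trans (pow_le_pow_of_le_one hε0 hε1 (by norm_num))) hpairs)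
    calc _ = ‖c + z m * (c + ∑ i ∈ range m, z i * ∑ j ∈ range i, z j)‖ := by
          simp only [c, prod_range_succ, sum_range_succ]
          ring_nf
      _ ≤ max ‖c‖ (‖z m‖ * ‖c + ∑ i ∈ range m, z i * ∑ j ∈ range i, z j‖) :=
          (norm_add_le_max _ _).trans (max_le_max le_rfl (norm_mul_le _ _))
      _ ≤ ε ^ 3 :=
          max_le (ih hz') ((mul_le_mul (hz m (by omega)) hc (norm_nonneg _) hε0).trans_eq (by ring))

namespace ZMod

theorem sum_range_eq_sum_univ {M : Type*} [AddCommMonoid M] (n : ℕ) [NeZero n] (f : ZMod n → M) :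
    ∑ j ∈ range n, f j = ∑ x, f x :=
  sum_nbij' (↑) val (by simp) (by simp [val_lt]) (fun _ ha ↦ val_cast_of_lt (mem_range.mp ha))
    (by simp) (by simp)

variable {p m k : ℕ} [Fact p.Prime]

theorem sum_range_pow_eq_zero (hk : k < p - 1) : ∑ j ∈ range p, (j : ZMod p) ^ k = 0 := by
  rw [sum_range_eq_sum_univ p (· ^ k), FiniteField.sum_pow_lt_card_sub_one _ _ (by rwa [card])]

theorem sum_range_succ_pow_eq_zero (hm : p = 2 * m + 1) (hk0 : 0 < k) (hk : k < p - 1) :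
    ∑ j ∈ range (2 * m), ((j + 1 : ℕ) : ZMod p) ^ k = 0 := by
  have h := sum_range_pow_eq_zero (p := p) hk
  rwa [show range p = range (2 * m + 1) by rw [hm], sum_range_succ', Nat.cast_zero,
    zero_pow hk0.ne', add_zero] at h

theorem sum_range_half_pow_eq_zero (hm : p = 2 * m + 1) (hk0 : 0 < k) (hk : k < p - 1)
    (heven : Even k) : ∑ i ∈ range m, ((i + 1 : ℕ) : ZMod p) ^ k = 0 := by
  have h := sum_range_succ_pow_eq_zero hm hk0 hk
  rw [sum_range_two_mul_eq_sum_add_reflect] at h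
  have hrefl : ∀ i ∈ range m, ((i + 1 : ℕ) : ZMod p) ^ k + ((2 * m - 1 - i + 1 : ℕ) : ZMod p) ^ k
      = 2 * ((i + 1 : ℕ) : ZMod p) ^ k := fun i hi ↦ by
    have hsum : ((2 * m - 1 - i + 1 : ℕ) : ZMod p) + ((i + 1 : ℕ) : ZMod p) = 0 := by
      rw [← Nat.cast_add, ← natCast_self p]
      congr 1
      have := mem_range.mp hi
      omega
    rw [eq_neg_of_add_eq_zero_left hsum, heven.neg_pow]
    ring
  rw [sum_congr rfl hrefl, ← mul_sum] at h
  have h2 : ((2 : ℕ) : ZMod p) ≠ 0 := by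
    rw [Ne, natCast_eq_zero_iff]
    exact fun h2 ↦ by have := Nat.le_of_dvd two_pos h2; omega
  exact (mul_eq_zero.mp h).resolve_left h2

theorem sum_range_odd_pow_eq_zero (hm : p = 2 * m + 1) (hk0 : 0 < k) (hk : k < p - 1)
    (heven : Even k) : ∑ i ∈ range m, ((2 * i + 1 : ℕ) : ZMod p) ^ k = 0 := by
  have h := sum_range_succ_pow_eq_zero hm hk0 hk
  rw [sum_range_two_mul] at h
  have hevens : ∑ i ∈ range m, ((2 * i + 1 + 1 : ℕ) : ZMod p) ^ k
      = 2 ^ k * ∑ i ∈ range m, ((i + 1 : ℕ) : ZMod p) ^ k := by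
    rw [mul_sum]
    exact sum_congr rfl fun i _ ↦ by rw [← mul_pow]; push_cast; ring
  rwa [hevens, sum_range_half_pow_eq_zero hm hk0 hk heven, mul_zero, add_zero] at h

end ZMod

def fermatQuotient {K : Type*} [DivisionRing K] (p : ℕ) (a : K) : K := (a ^ (p - 1) - 1) / p

namespace Padic

variable {p : ℕ} [Fact p.Prime]

theorem norm_p_mul_le {x : ℚ_[p]} {c : ℝ} (h : ‖x‖ ≤ c) : ‖(p : ℚ_[p]) * x‖ ≤ (p : ℝ)⁻¹ * c := by
  rw [norm_mul, norm_p]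
  exact mul_le_mul_of_nonneg_left h (by positivity)

theorem norm_two_mul_le (x : ℚ_[p]) : ‖2 * x‖ ≤ ‖x‖ := by
  rw [norm_mul]
  exact mul_le_of_le_one_left (norm_nonneg x) (by simpa using norm_natCast_le_one ℚ_[p] 2)

theorem norm_intCast_le_inv_of_dvd {k : ℤ} (h : (p : ℤ) ∣ k) : ‖(k : ℚ_[p])‖ ≤ (p : ℝ)⁻¹ := by
  simpa using (norm_int_le_pow_iff_dvd (p := p) k 1).mpr (by simpa using h)

theorem norm_natCast_le_inv_of_dvd {n : ℕ} (h : p ∣ n) : ‖(n : ℚ_[p])‖ ≤ (p : ℝ)⁻¹ := by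
  exact_mod_cast norm_intCast_le_inv_of_dvd (Int.natCast_dvd_natCast.mpr h)

theorem norm_natCast_inv_eq_one {n : ℕ} (h : ¬ p ∣ n) : ‖(n : ℚ_[p])⁻¹‖ = 1 := by
  rw [norm_inv, norm_natCast_eq_one_iff.mpr ((Nat.Prime.coprime_iff_not_dvd Fact.out).mpr h),
    inv_one]

theorem norm_natCast_pow_sub_one_le {n : ℕ} (h : ¬ p ∣ n) :
    ‖(n : ℚ_[p]) ^ (p - 1) - 1‖ ≤ (p : ℝ)⁻¹ := by
  have hcop : IsCoprime (n : ℤ) p :=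
    Int.isCoprime_iff_gcd_eq_one.mpr ((Nat.Prime.coprime_iff_not_dvd Fact.out).mpr h).symm
  exact_mod_cast norm_intCast_le_inv_of_dvd
    (Int.ModEq.pow_card_sub_one_eq_one Fact.out hcop).symm.dvd

theorem norm_natCast_inv_sq_sub_pow_le (hp : 3 ≤ p) {n : ℕ} (h : ¬ p ∣ n) :
    ‖(n : ℚ_[p])⁻¹ ^ 2 - (n : ℚ_[p]) ^ (p - 3)‖ ≤ (p : ℝ)⁻¹ := by
  have hn : (n : ℚ_[p]) ≠ 0 := Nat.cast_ne_zero.mpr fun h0 ↦ h (h0 ▸ dvd_zero p)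
  have hfactor : (n : ℚ_[p])⁻¹ ^ 2 - (n : ℚ_[p]) ^ (p - 3)
      = -((n : ℚ_[p])⁻¹ ^ 2 * ((n : ℚ_[p]) ^ (p - 1) - 1)) := by
    rw [show p - 1 = p - 3 + 2 by omega, pow_add]
    field_simp
    ring
  rw [hfactor, norm_neg, norm_mul, norm_pow, norm_natCast_inv_eq_one h, one_pow, one_mul]
  exact norm_natCast_pow_sub_one_le h

theorem norm_sum_inv_sq_le {ι : Type*} (hp : 3 ≤ p) (s : Finset ι) (g : ι → ℕ)
    (hg : ∀ i ∈ s, ¬ p ∣ g i) (hsum : ∑ i ∈ s, (g i : ZMod p) ^ (p - 3) = 0) :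
    ‖∑ i ∈ s, (g i : ℚ_[p])⁻¹ ^ 2‖ ≤ (p : ℝ)⁻¹ := by
  have hdvd : p ∣ ∑ i ∈ s, g i ^ (p - 3) := by
    rw [← ZMod.natCast_eq_zero_iff]
    push_cast
    exact hsum
  rw [← sub_add_cancel (∑ i ∈ s, (g i : ℚ_[p])⁻¹ ^ 2) (∑ i ∈ s, (g i : ℚ_[p]) ^ (p - 3)),
    ← sum_sub_distrib]
  refine (norm_add_le_max _ _).trans (max_le ?_ ?_)
  · exact norm_sum_le_of_forall_le_of_nonneg (by positivity) fun i hi ↦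
      norm_natCast_inv_sq_sub_pow_le hp (hg i hi)
  · exact_mod_cast norm_natCast_le_inv_of_dvd hdvd

variable {m : ℕ}

theorem norm_harmonic_two_mul_le (hm : p = 2 * m + 1) (hp5 : 5 ≤ p) :
    ‖(harmonic (2 * m) : ℚ_[p])‖ ≤ (p : ℝ)⁻¹ ^ 2 := by
  set a : ℕ → ℚ_[p] := fun i ↦ ((i + 1 : ℕ) : ℚ_[p])⁻¹
  set b : ℕ → ℚ_[p] := fun i ↦ ((2 * m - 1 - i + 1 : ℕ) : ℚ_[p])⁻¹
  -- `1/a + 1/b = p/(ab)` and `1/(ab) ≡ -1/a²` modulo `p`, because `a + b = p`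
  have hpair : ∀ i ∈ range m, a i + b i = p * (-a i ^ 2 + p * (a i ^ 2 * b i)) := by
    intro i hi
    have hi := mem_range.mp hi
    have hsum : ((i + 1 : ℕ) : ℚ_[p]) + ((2 * m - 1 - i + 1 : ℕ) : ℚ_[p]) = p := by
      rw [← Nat.cast_add]; congr 1; omega
    have ha : ((i + 1 : ℕ) : ℚ_[p]) ≠ 0 := Nat.cast_ne_zero.mpr (by omega)
    have hb : ((2 * m - 1 - i + 1 : ℕ) : ℚ_[p]) ≠ 0 := Nat.cast_ne_zero.mpr (by omega)
    simp only [a, b, ← hsum]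
    field_simp
    ring
  have hsq : ‖∑ i ∈ range m, a i ^ 2‖ ≤ (p : ℝ)⁻¹ :=
    norm_sum_inv_sq_le (by omega) _ (fun i ↦ i + 1)
      (fun i hi ↦ Nat.not_dvd_of_pos_of_lt (by omega) (by have := mem_range.mp hi; omega))
      (by exact_mod_cast ZMod.sum_range_half_pow_eq_zero hm (by omega) (by omega) ⟨m - 1, by omega⟩)
  have hrest : ‖(p : ℚ_[p]) * ∑ i ∈ range m, a i ^ 2 * b i‖ ≤ (p : ℝ)⁻¹ := by
    refine (norm_p_mul_le (norm_sum_le_of_forall_le_of_nonneg zero_le_one ?_)).trans_eq (mul_one _)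
    intro i hi
    have hi := mem_range.mp hi
    have ha : ‖a i‖ = 1 := norm_natCast_inv_eq_one (Nat.not_dvd_of_pos_of_lt (by omega) (by omega))
    have hb : ‖b i‖ = 1 := norm_natCast_inv_eq_one (Nat.not_dvd_of_pos_of_lt (by omega) (by omega))
    rw [norm_mul, norm_pow, ha, hb]
    norm_num
  have hH : (harmonic (2 * m) : ℚ_[p])
      = p * (-∑ i ∈ range m, a i ^ 2 + p * ∑ i ∈ range m, a i ^ 2 * b i) := by
    simp only [harmonic, Rat.cast_sum, Rat.cast_inv, Rat.cast_natCast]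
    rw [sum_range_two_mul_eq_sum_add_reflect, sum_congr rfl hpair, ← mul_sum, sum_add_distrib,
      sum_neg_distrib, ← mul_sum]
  rw [hH, sq]
  exact norm_p_mul_le ((norm_add_le_max _ _).trans (max_le (by rwa [norm_neg]) hrest))

theorem norm_fermatQuotient_two_le_one (hp : p ≠ 2) : ‖fermatQuotient p (2 : ℚ_[p])‖ ≤ 1 := by
  have h := norm_natCast_pow_sub_one_le (p := p) (n := 2)
    fun h ↦ hp ((Nat.prime_dvd_prime_iff_eq Fact.out Nat.prime_two).mp h)
  rw [fermatQuotient, norm_div, norm_p, div_le_one (by simp [(Fact.out : p.Prime).pos])]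
  exact_mod_cast h

theorem norm_odd_inv_eq_one (hm : p = 2 * m + 1) {i : ℕ} (hi : i < m) :
    ‖(2 * (i : ℚ_[p]) + 1)⁻¹‖ = 1 := by
  simpa using norm_natCast_inv_eq_one (p := p) (n := 2 * i + 1)
    (Nat.not_dvd_of_pos_of_lt (by omega) (by omega))

theorem norm_fermatQuotient_two_sub_le (hm : p = 2 * m + 1) :
    ‖fermatQuotient p (2 : ℚ_[p]) - ∑ i ∈ range m, (2 * (i : ℚ_[p]) + 1)⁻¹
      - p * ∑ i ∈ range m, (2 * (i : ℚ_[p]) + 1)⁻¹ * ∑ j ∈ range i, (2 * (j : ℚ_[p]) + 1)⁻¹‖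
      ≤ (p : ℝ)⁻¹ ^ 2 := by
  set q := fermatQuotient p (2 : ℚ_[p])
  set u : ℕ → ℚ_[p] := fun i ↦ (2 * (i : ℚ_[p]) + 1)⁻¹
  have hprod : ∏ i ∈ range m, (1 + p * u i) = 1 + p * q := by
    have hp0 : (p : ℚ_[p]) ≠ 0 := Nat.cast_ne_zero.mpr (Fact.out : p.Prime).ne_zero
    have h := prod_range_one_add_div_odd (K := ℚ_[p]) m
    rw [show (2 * m + 1 : ℚ_[p]) = p by exact_mod_cast hm.symm, show 2 * m = p - 1 by omega] at h
    simp only [u, q, fermatQuotient, mul_div_cancel₀ _ hp0, ← div_eq_mul_inv, h]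
    ring
  have h := norm_prod_range_one_add_sub_le (fun i ↦ (p : ℚ_[p]) * u i) m (by positivity)
    (Nat.cast_inv_le_one p) fun i hi ↦ by rw [norm_mul, norm_p, norm_odd_inv_eq_one hm hi, mul_one]
  rw [hprod, show 1 + p * q - (1 + ∑ i ∈ range m, p * u i
      + ∑ i ∈ range m, p * u i * ∑ j ∈ range i, p * u j)
      = p * (q - ∑ i ∈ range m, u i - p * ∑ i ∈ range m, u i * ∑ j ∈ range i, u j) by
    simp only [← mul_sum, mul_mul_mul_comm (p : ℚ_[p])]; ring, norm_mul, norm_p] at h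
  exact le_of_mul_le_mul_left (h.trans_eq (by ring)) (by simp [(Fact.out : p.Prime).pos])

theorem norm_two_mul_fermatQuotient_sub_le (hm : p = 2 * m + 1) (hp5 : 5 ≤ p) :
    ‖2 * fermatQuotient p (2 : ℚ_[p]) - 2 * ∑ i ∈ range m, (2 * (i : ℚ_[p]) + 1)⁻¹
      - p * fermatQuotient p (2 : ℚ_[p]) ^ 2‖ ≤ (p : ℝ)⁻¹ ^ 2 := by
  have hq := norm_fermatQuotient_two_sub_le hm
  set q := fermatQuotient p (2 : ℚ_[p])
  set u : ℕ → ℚ_[p] := fun i ↦ (2 * (i : ℚ_[p]) + 1)⁻¹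
  set O := ∑ i ∈ range m, u i
  set T := ∑ i ∈ range m, u i * ∑ j ∈ range i, u j
  have hu : ∀ i < m, ‖u i‖ = 1 := fun i hi ↦ norm_odd_inv_eq_one hm hi
  have hO : ‖O‖ ≤ 1 :=
    norm_sum_le_of_forall_le_of_nonneg zero_le_one fun i hi ↦ (hu i (mem_range.mp hi)).le
  have hT : ‖T‖ ≤ 1 := norm_sum_le_of_forall_le_of_nonneg zero_le_one fun i hi ↦ by
    have hi := mem_range.mp hi
    rw [norm_mul, hu i hi, one_mul]
    exact norm_sum_le_of_forall_le_of_nonneg zero_le_one fun j hj ↦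
      (hu j ((mem_range.mp hj).trans hi)).le
  have hOq : ‖O - q‖ ≤ (p : ℝ)⁻¹ := by
    rw [show O - q = -((q - O - p * T) + p * T) by ring, norm_neg]
    refine (norm_add_le_max _ _).trans (max_le ?_ (by simpa using norm_p_mul_le hT))
    exact hq.trans (pow_le_of_le_one (by positivity) (Nat.cast_inv_le_one p) two_ne_zero)
  have hsq : ‖∑ i ∈ range m, u i ^ 2‖ ≤ (p : ℝ)⁻¹ := by
    have h := norm_sum_inv_sq_le (p := p) (by omega) (range m) (fun i ↦ 2 * i + 1)
      (fun i hi ↦ Nat.not_dvd_of_pos_of_lt (by omega) (by have := mem_range.mp hi; omega))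
      (by exact_mod_cast ZMod.sum_range_odd_pow_eq_zero hm (by omega) (by omega) ⟨m - 1, by omega⟩)
    simpa [u] using h
  -- `2T = O² - Σ u²` with `O ≡ q` and `Σ u² ≡ 0` modulo `p`
  have hT2 : ‖2 * T - q ^ 2‖ ≤ (p : ℝ)⁻¹ := by
    rw [two_mul_sum_mul_sum_range, show O ^ 2 - ∑ i ∈ range m, u i ^ 2 - q ^ 2
      = (O - q) * (O + q) + -∑ i ∈ range m, u i ^ 2 by ring]
    refine (norm_add_le_max _ _).trans (max_le ?_ (by rwa [norm_neg]))
    rw [norm_mul]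
    have hOq1 : ‖O + q‖ ≤ 1 :=
      (norm_add_le_max _ _).trans (max_le hO (norm_fermatQuotient_two_le_one (by omega)))
    exact (mul_le_mul hOq hOq1 (norm_nonneg _) (by positivity)).trans_eq (mul_one _)
  rw [show 2 * q - 2 * O - p * q ^ 2 = 2 * (q - O - p * T) + p * (2 * T - q ^ 2) by ring]
  refine (norm_add_le_max _ _).trans (max_le ((norm_two_mul_le _).trans hq) ?_)
  simpa [sq] using norm_p_mul_le hT2

theorem norm_harmonic_add_two_mul_fermatQuotient_sub_le (hm : p = 2 * m + 1) (hp5 : 5 ≤ p) :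
    ‖(harmonic m : ℚ_[p]) + 2 * fermatQuotient p (2 : ℚ_[p])
      - p * fermatQuotient p (2 : ℚ_[p]) ^ 2‖ ≤ (p : ℝ)⁻¹ ^ 2 := by
  rw [show (harmonic m : ℚ_[p]) + 2 * fermatQuotient p 2 - p * fermatQuotient p 2 ^ 2
      = 2 * (harmonic (2 * m) : ℚ_[p]) + (2 * fermatQuotient p 2
        - 2 * ∑ i ∈ range m, (2 * (i : ℚ_[p]) + 1)⁻¹ - p * fermatQuotient p 2 ^ 2) by
    rw [harmonic_two_mul]; push_cast; ring]
  exact (norm_add_le_max _ _).trans (max_le ((norm_two_mul_le _).trans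
    (norm_harmonic_two_mul_le hm hp5)) (norm_two_mul_fermatQuotient_sub_le hm hp5))

end Padic

theorem stmt12 (p : ℕ) (hp : p.Prime) (hp5 : 5 ≤ p) :
    padicNorm p
      ((∑ j ∈ Finset.Icc 1 ((p - 1) / 2), (1 : ℚ) / j)
        - (-2 * (((2 : ℚ) ^ (p - 1) - 1) / p)
            + (p : ℚ) * (((2 : ℚ) ^ (p - 1) - 1) / p) ^ 2))
      ≤ (p : ℚ) ^ (-2 : ℤ) := by
  have := Fact.mk hp
  obtain ⟨k, hk⟩ := hp.odd_of_ne_two (by omega)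
  have h := Padic.norm_harmonic_add_two_mul_fermatQuotient_sub_le (m := (p - 1) / 2) (by omega) hp5
  rw [← Rat.cast_le (K := ℝ), ← Padic.eq_padicNorm, Rat.cast_zpow, Rat.cast_natCast, zpow_neg,
    ← inv_zpow, zpow_ofNat]
  refine le_of_eq_of_le (congrArg norm ?_) h
  rw [harmonic_eq_sum_Icc, fermatQuotient]
  push_cast [one_div]
  ring
end

section
/- For any prime p ≥ 5, the central binomial coefficient binomial(p-1, (p-1)/2) is congruent to (-1)^((p-1)/2) (1 + 2p q_p(2) + p^2 q_p(2)^2) modulo p^3, where q_p(2) = (2^(p-1)-1)/p. -/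
/-!
Write `m = (p - 1) / 2` and `H = ∑_{k ≤ m} 1/k`. Modulo `p³`, `(-1)^m C(p-1, m)` equals both
`X = ∏_{k ≤ m} (1 - p/k)` and `4^m Y` with `Y = ∏_{k ≤ m} (1 - p/(2k))`, the latter because
`C(2m, m) 2^m m! = 4^m · 1 · 3 ⋯ (2m - 1)`. As `∑_{k ≤ m} 1/k² ≡ 0 (mod p)` for
`p ≥ 5`, the products `X` and `Y` agree modulo `p³` with the truncations of `e^(-pH)` and
`e^(-pH/2)`, so `X = Y²`; since `Y` is a unit, `X = 4^m Y` gives `Y = 4^m`, i.e. Morley's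
congruence `C(p-1, m) ≡ (-1)^m 4^(p-1)`. Finally `1 + 2pq + p²q² = (1 + pq)² = 4^(p-1)`.
-/

open Finset
open scoped Nat

section TruncatedProduct

variable {R ι : Type*} [CommRing R]

theorem two_mul_prod_one_sub_mul_of_pow_three_eq_zero {t : R} (ht : t ^ 3 = 0)
    (s : Finset ι) (x : ι → R) :
    2 * ∏ i ∈ s, (1 - t * x i) =
      2 - 2 * t * ∑ i ∈ s, x i + t ^ 2 * ((∑ i ∈ s, x i) ^ 2 - ∑ i ∈ s, x i ^ 2) := by
  classical
  induction s using Finset.induction_on with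
  | empty => simp
  | insert a s ha ih =>
    rw [prod_insert ha, sum_insert ha, sum_insert ha]
    linear_combination
      (1 - t * x a) * ih - x a * ((∑ i ∈ s, x i) ^ 2 - ∑ i ∈ s, x i ^ 2) * ht

theorem prod_sub_eq_prod_mul_prod_one_sub_mul {s : Finset ι} {a b : ι → R}
    (hab : ∀ i ∈ s, a i * b i = 1) (t : R) :
    ∏ i ∈ s, (a i - t) = (∏ i ∈ s, a i) * ∏ i ∈ s, (1 - t * b i) := by
  rw [← prod_mul_distrib]
  refine prod_congr rfl fun i hi => ?_
  linear_combination t * hab i hi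

/-- `2X` and `8Y` are the second-order truncations of `2e^(-u)` and `8e^(-u/2)`, so `X = Y²`,
and `Y` is a unit. -/
theorem eq_sq_of_eq_mul_of_pow_three_eq_zero {u X Y W : R} (hu : u ^ 3 = 0) (h2 : IsUnit (2 : R))
    (hX : 2 * X = 2 - 2 * u + u ^ 2) (hY : 8 * Y = 8 - 4 * u + u ^ 2) (hXY : X = W * Y) :
    X = W ^ 2 := by
  have hXY2 : X = Y ^ 2 := (h2.pow 6).mul_left_cancel <| by
    linear_combination 32 * hX - (8 * Y + 8 - 4 * u + u ^ 2) * hY + (8 - u) * hu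
  have hYsub : (Y - 1) ^ 3 = 0 := (h2.pow 9).mul_left_cancel <| by
    linear_combination ((8 * Y - 8) ^ 2 + (8 * Y - 8) * (u ^ 2 - 4 * u) + (u ^ 2 - 4 * u) ^ 2) * hY
      + (u - 4) ^ 3 * hu
  have hYunit : IsUnit Y := IsUnit.of_mul_eq_one (1 - (Y - 1) + (Y - 1) ^ 2) <| by
    linear_combination hYsub
  have hYW : Y = W := hYunit.mul_right_cancel (by rw [← hXY, hXY2, sq])
  rw [hXY2, hYW]

end TruncatedProduct

theorem Nat.centralBinom_mul_two_pow_mul_factorial (m : ℕ) :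
    m.centralBinom * (2 ^ m * m !) = 4 ^ m * ∏ i ∈ range m, (2 * i + 1) := by
  induction m with
  | zero => simp
  | succ m ih =>
    calc (m + 1).centralBinom * (2 ^ (m + 1) * (m + 1)!)
        = 2 ^ (m + 1) * m ! * ((m + 1) * (m + 1).centralBinom) := by
          rw [Nat.factorial_succ]; ring
      _ = 4 * (2 * m + 1) * (m.centralBinom * (2 ^ m * m !)) := by
          rw [Nat.succ_mul_centralBinom_succ]; ring
      _ = 4 ^ (m + 1) * ∏ i ∈ range (m + 1), (2 * i + 1) := by
          rw [ih, prod_range_succ]; ring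

namespace ZMod

theorem natCast_pow_mul_eq_zero_of_castHom_eq_zero {n k : ℕ} {x : ZMod (n ^ (k + 1))}
    (hx : castHom (dvd_pow_self n k.succ_ne_zero) (ZMod n) x = 0) :
    (n : ZMod (n ^ (k + 1))) ^ k * x = 0 := by
  obtain ⟨y, rfl⟩ := intCast_surjective x
  rw [map_intCast, intCast_zmod_eq_zero_iff_dvd] at hx
  obtain ⟨z, rfl⟩ := hx
  push_cast
  rw [← mul_assoc, ← pow_succ, ← Nat.cast_pow, natCast_self, zero_mul]

theorem sum_eq_add_two_nsmul_sum_range {M : Type*} [AddCommMonoid M] {p m : ℕ} [NeZero p]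
    (hpm : p = 2 * m + 1) (f : ZMod p → M) (hf : ∀ x, f (-x) = f x) :
    ∑ x, f x = f 0 + 2 • ∑ i ∈ range m, f ((i : ZMod p) + 1) := by
  have hrange : ∑ x, f x = ∑ i ∈ range p, f i :=
    sum_nbij' ZMod.val Nat.cast (fun x _ => mem_range.2 (val_lt x)) (by simp)
      (fun x _ => natCast_zmod_val x)
      (fun i hi => val_cast_of_lt (mem_range.1 hi)) (fun x _ => by rw [natCast_zmod_val])
  have hreflect : ∑ i ∈ range m, f ((m + i + 1 : ℕ) : ZMod p) =
      ∑ i ∈ range m, f ((i + 1 : ℕ) : ZMod p) := by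
    rw [← sum_range_reflect]
    refine sum_congr rfl fun i hi => ?_
    have hi := mem_range.1 hi
    rw [← hf]
    congr 1
    have hsum : ((m + (m - 1 - i) + 1 + (i + 1) : ℕ) : ZMod p) = 0 := by
      rw [show m + (m - 1 - i) + 1 + (i + 1) = p by omega, natCast_self]
    push_cast at hsum ⊢
    linear_combination -hsum
  rw [hrange, show range p = range (m + m + 1) by rw [hpm, two_mul], sum_range_succ',
    sum_range_add, hreflect, two_nsmul, add_comm]
  push_cast
  rfl

theorem isUnit_natCast_of_not_dvd {p a : ℕ} (hp : p.Prime) (k : ℕ) (h : ¬p ∣ a) :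
    IsUnit (a : ZMod (p ^ k)) :=
  (isUnit_iff_coprime _ _).2 (((hp.coprime_iff_not_dvd).2 h).symm.pow_right k)

theorem isUnit_two {p : ℕ} (hp : p.Prime) (hp2 : p ≠ 2) (k : ℕ) :
    IsUnit (2 : ZMod (p ^ k)) := by
  exact_mod_cast isUnit_natCast_of_not_dvd hp k
    (Nat.not_dvd_of_pos_of_lt two_pos (lt_of_le_of_ne hp.two_le hp2.symm))

theorem natCast_add_one_mul_inv {p : ℕ} (hp : p.Prime) (k i : ℕ) (hi : i + 1 < p) :
    ((i : ZMod (p ^ k)) + 1) * ((i : ZMod (p ^ k)) + 1)⁻¹ = 1 :=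
  mul_inv_of_unit _ <| by
    exact_mod_cast isUnit_natCast_of_not_dvd hp k (Nat.not_dvd_of_pos_of_lt i.succ_pos hi)

theorem prod_one_sub_mul_inv_eq_neg_one_pow_mul_choose {p m : ℕ} (hp : p.Prime) (hmp : m < p)
    (k : ℕ) :
    ∏ i ∈ range m, (1 - p * ((i : ZMod (p ^ k)) + 1)⁻¹) = (-1) ^ m * (p - 1).choose m := by
  have hfact : IsUnit (m ! : ZMod (p ^ k)) :=
    isUnit_natCast_of_not_dvd hp k (by rw [hp.dvd_factorial]; omega)
  refine hfact.mul_left_cancel ?_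
  calc (m ! : ZMod (p ^ k)) * ∏ i ∈ range m, (1 - p * ((i : ZMod (p ^ k)) + 1)⁻¹)
      = ∏ i ∈ range m, (((i : ZMod (p ^ k)) + 1) - p) := by
        rw [prod_sub_eq_prod_mul_prod_one_sub_mul fun i hi =>
          natCast_add_one_mul_inv hp k i (by rw [mem_range] at hi; omega),
          ← prod_range_add_one_eq_factorial]
        push_cast; rfl
    _ = (-1) ^ m * ((p - 1).descFactorial m : ℕ) := by
        rw [Nat.descFactorial_eq_prod_range, Nat.cast_prod,
          show (-1 : ZMod (p ^ k)) ^ m = (-1) ^ #(range m) by rw [card_range], ← prod_neg]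
        refine prod_congr rfl fun i hi => ?_
        rw [Nat.cast_sub (by rw [mem_range] at hi; omega), Nat.cast_sub hp.one_le]
        ring
    _ = (m ! : ZMod (p ^ k)) * ((-1) ^ m * (p - 1).choose m) := by
        rw [Nat.descFactorial_eq_factorial_mul_choose]; push_cast; ring

theorem four_pow_mul_prod_one_sub_mul_half_inv_eq_neg_one_pow_mul_choose {p m : ℕ}
    (hp : p.Prime) (hpm : p = 2 * m + 1) (k : ℕ) :
    4 ^ m * ∏ i ∈ range m, (1 - p * (2⁻¹ * ((i : ZMod (p ^ k)) + 1)⁻¹)) =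
      (-1) ^ m * (p - 1).choose m := by
  have h2 : IsUnit (2 : ZMod (p ^ k)) := isUnit_two hp (by omega) k
  have hfact : IsUnit (m ! : ZMod (p ^ k)) :=
    isUnit_natCast_of_not_dvd hp k (by rw [hp.dvd_factorial]; omega)
  have hprod_even : ∏ i ∈ range m, 2 * ((i : ZMod (p ^ k)) + 1) = 2 ^ m * m ! := by
    rw [prod_mul_distrib, prod_const, card_range, ← prod_range_add_one_eq_factorial]
    push_cast; rfl
  refine ((h2.pow m).mul hfact).mul_left_cancel ?_
  calc 2 ^ m * (m ! : ZMod (p ^ k)) *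
        (4 ^ m * ∏ i ∈ range m, (1 - p * (2⁻¹ * ((i : ZMod (p ^ k)) + 1)⁻¹)))
      = 4 ^ m * ∏ i ∈ range m, (2 * ((i : ZMod (p ^ k)) + 1) - p) := by
        rw [prod_sub_eq_prod_mul_prod_one_sub_mul fun i hi => ?_, hprod_even]
        · ring
        · linear_combination (((i : ZMod (p ^ k)) + 1) * ((i : ZMod (p ^ k)) + 1)⁻¹) *
            mul_inv_of_unit _ h2 + natCast_add_one_mul_inv hp k i (by rw [mem_range] at hi; omega)
    _ = 4 ^ m * ∏ i ∈ range m, -((2 * (m - 1 - i) + 1 : ℕ) : ZMod (p ^ k)) := by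
        refine congrArg _ (prod_congr rfl fun i hi => ?_)
        have hsum : ((2 * (m - 1 - i) + 1 + 2 * (i + 1) : ℕ) : ZMod (p ^ k)) = p := by
          congr 1; rw [mem_range] at hi; omega
        push_cast at hsum ⊢
        linear_combination hsum
    _ = 2 ^ m * (m ! : ZMod (p ^ k)) * ((-1) ^ m * (p - 1).choose m) := by
        rw [prod_neg, card_range, prod_range_reflect (fun j => ((2 * j + 1 : ℕ) : ZMod (p ^ k))),
          ← Nat.cast_prod, show p - 1 = 2 * m by omega, ← Nat.centralBinom_eq_two_mul_choose]
        have hcentral := congrArg (Nat.cast : ℕ → ZMod (p ^ k))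
          (Nat.centralBinom_mul_two_pow_mul_factorial m)
        push_cast at hcentral ⊢
        linear_combination -(-1) ^ m * hcentral

theorem sum_range_inv_sq_eq_zero {p m : ℕ} [Fact p.Prime] (hp3 : 3 < p)
    (hpm : p = 2 * m + 1) : ∑ i ∈ range m, ((i : ZMod p) + 1)⁻¹ ^ 2 = 0 := by
  have hfull : ∑ x : ZMod p, x⁻¹ ^ 2 = 0 := by
    calc ∑ x : ZMod p, x⁻¹ ^ 2 = ∑ x : ZMod p, x ^ 2 :=
          Equiv.sum_comp (Equiv.inv _) fun x => x ^ 2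
      _ = 0 := FiniteField.sum_pow_lt_card_sub_one _ _ (by rw [ZMod.card]; omega)
  rw [sum_eq_add_two_nsmul_sum_range hpm _ fun x => by rw [inv_neg, neg_sq], inv_zero,
    zero_pow two_ne_zero, zero_add, nsmul_eq_mul, Nat.cast_ofNat] at hfull
  have h2 : (2 : ZMod p) ≠ 0 := by
    exact_mod_cast (natCast_eq_zero_iff 2 p).not.2 (Nat.not_dvd_of_pos_of_lt two_pos (by omega))
  exact (mul_eq_zero.1 hfull).resolve_left h2

theorem natCast_sq_mul_sum_range_inv_sq_eq_zero {p m : ℕ} (hp : p.Prime) (hp3 : 3 < p)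
    (hpm : p = 2 * m + 1) :
    (p : ZMod (p ^ 3)) ^ 2 * ∑ i ∈ range m, ((i : ZMod (p ^ 3)) + 1)⁻¹ ^ 2 = 0 := by
  have := Fact.mk hp
  refine natCast_pow_mul_eq_zero_of_castHom_eq_zero (k := 2) ?_
  rw [map_sum, ← sum_range_inv_sq_eq_zero hp3 hpm]
  refine sum_congr rfl fun i hi => ?_
  rw [map_pow]
  congr 1
  refine eq_inv_of_mul_eq_one_right ?_
  have hinv := congrArg (castHom (dvd_pow_self p (by norm_num : 3 ≠ 0)) (ZMod p))
    (natCast_add_one_mul_inv hp 3 i (by rw [mem_range] at hi; omega))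
  rwa [map_mul, map_add, map_natCast, map_one] at hinv

theorem choose_eq_neg_one_pow_mul_four_pow {p m : ℕ} (hp : p.Prime) (hp3 : 3 < p)
    (hpm : p = 2 * m + 1) :
    ((p - 1).choose m : ZMod (p ^ 3)) = (-1) ^ m * 4 ^ (p - 1) := by
  set t : ZMod (p ^ 3) := (p : ZMod (p ^ 3))
  set x : ℕ → ZMod (p ^ 3) := fun i => ((i : ZMod (p ^ 3)) + 1)⁻¹
  set S := ∑ i ∈ range m, x i
  have ht : t ^ 3 = 0 := by rw [← Nat.cast_pow, natCast_self]
  have hQ : t ^ 2 * ∑ i ∈ range m, x i ^ 2 = 0 :=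
    natCast_sq_mul_sum_range_inv_sq_eq_zero hp hp3 hpm
  have h2 : IsUnit (2 : ZMod (p ^ 3)) := isUnit_two hp (by omega) 3
  have hX :
      2 * ((-1) ^ m * (p - 1).choose m : ZMod (p ^ 3)) = 2 - 2 * (t * S) + (t * S) ^ 2 := by
    rw [← prod_one_sub_mul_inv_eq_neg_one_pow_mul_choose hp (by omega) 3,
      two_mul_prod_one_sub_mul_of_pow_three_eq_zero ht]
    linear_combination -hQ
  have hY : 8 * ∏ i ∈ range m, (1 - t * (2⁻¹ * x i)) = 8 - 4 * (t * S) + (t * S) ^ 2 := by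
    have hexp := two_mul_prod_one_sub_mul_of_pow_three_eq_zero ht (range m) fun i => 2⁻¹ * x i
    simp only [mul_pow, ← mul_sum] at hexp
    linear_combination 4 * hexp + (t ^ 2 * S ^ 2 * (2 * 2⁻¹ + 1) - 4 * t * S) *
      mul_inv_of_unit _ h2 - 4 * 2⁻¹ ^ 2 * hQ
  have hXY := (four_pow_mul_prod_one_sub_mul_half_inv_eq_neg_one_pow_mul_choose hp hpm 3).symm
  have hmain := eq_sq_of_eq_mul_of_pow_three_eq_zero (by rw [mul_pow, ht, zero_mul]) h2 hX hY hXY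
  rw [← pow_mul, show m * 2 = p - 1 by omega] at hmain
  have hsign : ((-1 : ZMod (p ^ 3)) ^ m) ^ 2 = 1 := by
    rw [← pow_mul, pow_mul', neg_one_sq, one_pow]
  linear_combination (-1) ^ m * hmain - ((p - 1).choose m : ZMod (p ^ 3)) * hsign

end ZMod

theorem morley_congruence {p : ℕ} (hp : p.Prime) (hp5 : 5 ≤ p) :
    ((p - 1).choose ((p - 1) / 2) : ℤ) ≡ (-1) ^ ((p - 1) / 2) * 4 ^ (p - 1) [ZMOD p ^ 3] := by
  obtain ⟨m, hpm⟩ := hp.odd_of_ne_two (by omega)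
  rw [show (p - 1) / 2 = m by omega, show (p : ℤ) ^ 3 = ((p ^ 3 : ℕ) : ℤ) by push_cast; rfl,
    ← ZMod.intCast_eq_intCast_iff]
  push_cast
  exact ZMod.choose_eq_neg_one_pow_mul_four_pow hp (by omega) hpm

theorem stmt15 (p : ℕ) (hp : p.Prime) (hp5 : 5 ≤ p) (q : ℤ)
    (hq : (p : ℤ) * q = 2 ^ (p - 1) - 1) :
    (Nat.choose (p - 1) ((p - 1) / 2) : ℤ) ≡
      (-1) ^ ((p - 1) / 2) * (1 + 2 * (p : ℤ) * q + (p : ℤ) ^ 2 * q ^ 2)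
      [ZMOD ((p : ℤ) ^ 3)] := by
  have hfour : 1 + 2 * (p : ℤ) * q + (p : ℤ) ^ 2 * q ^ 2 = 4 ^ (p - 1) := by
    rw [show (4 : ℤ) ^ (p - 1) = (2 ^ (p - 1)) ^ 2 by
      rw [← pow_mul, mul_comm, pow_mul]; norm_num]
    linear_combination (1 + p * q + 2 ^ (p - 1)) * hq
  rw [hfour]
  exact morley_congruence hp hp5
end
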